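/- For all natural numbers m ≥ 1 and n, (L(m) − 1 − (−1)^m) · ∑_{k=0}^{n−1} F(mk) = F(mn)·(1 − L(m)) + F(m(n+1)) − F(m), where the identity is read in the integers. -/
import Mathlib


def F : ℕ → ℤ
  | 0 => 0
  | 1 => 1
  | (n + 2) => F (n + 1) + F n

def L : ℕ → ℤ
  | 0 => 2
  | 1 => 1
  | (n + 2) => L (n + 1) + L n

lemma F_add (x p : ℕ) : F (x + p + 1) = F (x + 1) * F (p + 1) + F x * F p := by
  induction p using Nat.twoStepInduction with
  | zero => simp [F]
  | one => show F (x + 2) = _; simp [F]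
  | more p ih1 ih2 =>
    have e : x + (p + 2) + 1 = (x + p + 1) + 2 := by omega
    rw [e, show F ((x + p + 1) + 2) = F ((x + p + 1) + 1) + F (x + p + 1) from rfl,
        show x + p + 1 + 1 = x + (p + 1) + 1 from by omega, ih1, ih2,
        show F (p + 1 + 1) = F (p + 1) + F p from rfl,
        show F (p + 2 + 1) = F (p + 2) + F (p + 1) from rfl,
        show F (p + 2) = F (p + 1) + F p from rfl]
    ring

lemma cassini (p : ℕ) : F (p + 1) ^ 2 - F (p + 2) * F p = (-1) ^ p := by
  induction p with
  | zero => simp [F]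
  | succ p ih =>
    rw [show F (p+3) = F (p+2) + F (p+1) from rfl,
        show F (p+2) = F (p+1) + F p from rfl] at *
    linear_combination -ih

lemma L_eq (m : ℕ) : L m = 2 * F (m + 1) - F m := by
  induction m using Nat.twoStepInduction with
  | zero => simp [F, L]
  | one => simp [F, L]
  | more m ih1 ih2 =>
    rw [show L (m+2) = L (m+1) + L m from rfl, ih1, ih2,
        show F (m+3) = F (m+2) + F (m+1) from rfl,
        show F (m+2) = F (m+1) + F m from rfl]
    ring

lemma step (p x : ℕ) :
    F (x + 2 * (p + 1)) = L (p + 1) * F (x + (p + 1)) + (-1) ^ p * F x := by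
  have h1 : F (x + (p + 1)) = F (x + 1) * F (p + 1) + F x * F p := F_add x p
  have h2 : F (x + 2 * (p + 1)) =
      F (x + (p + 1) + 1) * F (p + 1) + F (x + (p + 1)) * F p := by
    have := F_add (x + (p + 1)) p
    rw [show x + (p+1) + p + 1 = x + 2 * (p+1) by ring] at this
    exact this
  have h3 : F (x + (p + 1) + 1) = F (x + 2) * F (p + 1) + F (x + 1) * F p := by
    have := F_add (x + 1) p
    rw [show x + 1 + p + 1 = x + (p+1) + 1 by ring] at this
    exact this
  have hc := cassini p
  have hL : L (p + 1) = 2 * F (p + 2) - F (p + 1) := L_eq (p + 1)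
  rw [h2, h3, h1, hL, show F (p+2) = F (p+1) + F p from rfl,
      show F (x+2) = F (x+1) + F x from rfl]
  rw [show F (p+2) = F (p+1) + F p from rfl] at hc
  linear_combination F x * hc

theorem fib_msection_sum (m : ℕ) (hm : 1 ≤ m) (n : ℕ) :
    (L m - 1 - (-1 : ℤ) ^ m) * ∑ k ∈ Finset.range n, F (m * k) =
      F (m * n) * (1 - L m) + F (m * (n + 1)) - F m := by
  obtain ⟨p, rfl⟩ := Nat.exists_eq_add_of_le hm
  set q := 1 + p with hq
  induction n with
  | zero => simp [F]
  | succ n ih =>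
    rw [Finset.sum_range_succ, mul_add, ih]
    have hstep : F (q * (n + 2)) = L q * F (q * (n + 1)) + (-1) ^ p * F (q * n) := by
      have := step p (q * n)
      rw [show q * n + 2 * (p + 1) = q * (n + 2) by rw [hq]; ring,
          show q * n + (p + 1) = q * (n + 1) by rw [hq]; ring,
          show p + 1 = q by omega] at this
      exact this
    have hsign : ((-1 : ℤ)) ^ q = -(-1 : ℤ) ^ p := by
      rw [hq, add_comm, pow_succ]; ring
    rw [show (n:ℕ) + 1 + 1 = n + 2 by ring] at hstep ⊢
    rw [hstep, hsign]
    ring
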